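/- arXiv:1611.09174 — 2 statements merged into one kernel-verified Lean document; each statement's English description precedes it below -/
import Mathlib

section
/- Let n ∈ ℕ and let α, β : ℝ → ℝ be additive functions with α + β = id, such that α(√2 − 1) = −1, α(1) = 1, and α(1 + √2) = 1 (equivalently, α is the ℚ-linear projection onto the rational coefficient of 1 with respect to a Hamel basis containing 1, under which β(1) = 0). Then the function f(x) = (α(x))^{n+1} + (β(x))^{n+1} is not n-Wright-convex: with h₁ = √2 − 1, h₂ = 1, h₃ = … = h_{n+1} = 1 + √2 (all positive), one has Δ_{h₁…h_{n+1}} f(x) = −(n+1)! < 0 for every x. -/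
open List Finset

/-- One-step difference operator: `Δ h f x = f (x + h) - f x`. -/
noncomputable def dOp (h : ℝ) (f : ℝ → ℝ) : ℝ → ℝ := fun x => f (x + h) - f x

/-- Iterated difference operator `Δ_{h₁…hₙ} f`, with
`Δ_{h₁…hₙhₙ₊₁} f = Δ_{h₁…hₙ} (Δ_{hₙ₊₁} f)`. -/
noncomputable def dOps (hs : List ℝ) (f : ℝ → ℝ) : ℝ → ℝ := hs.foldr dOp f

open Polynomial in
noncomputable def pD (c : ℝ) (q : ℝ[X]) : ℝ[X] := q.comp (X + C c) - q

open Polynomial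

lemma pD_C (c a : ℝ) : pD c (C a) = 0 := by simp [pD]

lemma pD_of_degree_le_zero (c : ℝ) (q : ℝ[X]) (h : q.degree ≤ 0) : pD c q = 0 := by
  rw [eq_C_of_degree_le_zero h]
  exact pD_C c _

lemma degree_pD_le (c : ℝ) (q : ℝ[X]) (k : ℕ) (h : q.degree ≤ (k : ℕ) + 1) :
    (pD c q).degree ≤ (k : ℕ) := by
  by_cases hk : q.degree ≤ (k : ℕ)
  · have hnd : q.natDegree ≤ k := natDegree_le_iff_degree_le.2 hk
    have h1 : (q.comp (X + C c)).degree ≤ (k : ℕ) := by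
      refine le_trans degree_le_natDegree ?_
      rw [natDegree_comp, natDegree_X_add_C, mul_one]
      exact_mod_cast Nat.cast_le.2 hnd
    exact le_trans (degree_sub_le _ _) (max_le h1 hk)
  · push_neg at hk
    have hq0 : q ≠ 0 := by
      intro h0; rw [h0, degree_zero] at hk; exact absurd hk (by simp)
    have hdeg : q.degree = ((k : ℕ) + 1 : ℕ) := by
      have := h
      rw [degree_eq_natDegree hq0] at hk h ⊢
      exact_mod_cast le_antisymm (by exact_mod_cast h) (by exact_mod_cast hk)
    have hnd : q.natDegree = k + 1 := natDegree_eq_of_degree_eq_some (by exact_mod_cast hdeg)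
    have hndX : (X + C c : ℝ[X]).natDegree ≠ 0 := by rw [natDegree_X_add_C]; exact one_ne_zero
    have hlc : (q.comp (X + C c)).leadingCoeff = q.leadingCoeff := by
      rw [leadingCoeff_comp hndX]
      simp [leadingCoeff_X_add_C]
    have hcomp0 : q.comp (X + C c) ≠ 0 := by
      intro h0
      apply hq0
      have := hlc
      rw [h0, leadingCoeff_zero] at this
      exact leadingCoeff_eq_zero.mp this.symm
    have hdcomp : (q.comp (X + C c)).degree = q.degree := by
      rw [degree_eq_natDegree hcomp0, degree_eq_natDegree hq0, natDegree_comp,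
        natDegree_X_add_C, mul_one]
    have hlt : (pD c q).degree < q.degree := by
      have := degree_sub_lt hdcomp hcomp0 hlc
      rwa [hdcomp] at this
    rw [hdeg] at hlt
    exact Order.le_of_lt_succ (by exact_mod_cast hlt)

lemma degree_foldr_pD_le (cs : List ℝ) : ∀ (q : ℝ[X]) (k : ℕ),
    q.degree ≤ ((k + cs.length : ℕ) : WithBot ℕ) → (cs.foldr pD q).degree ≤ (k : ℕ) := by
  induction cs with
  | nil => intro q k h; simpa using h
  | cons c cs ih =>
    intro q k h
    have e : (k + 1) + cs.length = k + (c :: cs).length := by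
      simp only [List.length_cons]; omega
    have h' : q.degree ≤ (((k + 1) + cs.length : ℕ) : WithBot ℕ) := by
      rw [e]; exact h
    have := ih q (k + 1) h'
    exact degree_pD_le c _ k (by exact_mod_cast this)

lemma foldr_pD_eq_zero (cs : List ℝ) (q : ℝ[X]) (h : q.degree < (cs.length : ℕ)) :
    cs.foldr pD q = 0 := by
  cases cs with
  | nil =>
    simp only [List.length_nil, Nat.cast_zero] at h
    have h0 : q.degree < 0 := by exact_mod_cast h
    simpa [List.foldr] using degree_eq_bot.mp (Nat.WithBot.lt_zero_iff.mp h0)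
  | cons c cs =>
    have hle : q.degree ≤ ((0 + cs.length : ℕ) : WithBot ℕ) := by
      simp only [List.length_cons] at h
      rw [zero_add]
      exact Order.le_of_lt_succ (by exact_mod_cast h)
    have h0 := degree_foldr_pD_le cs q 0 hle
    simpa [List.foldr] using pD_of_degree_le_zero c _ (by exact_mod_cast h0)

lemma pD_add (c : ℝ) (p q : ℝ[X]) : pD c (p + q) = pD c p + pD c q := by
  simp [pD, add_comp]; ring

lemma pD_Cmul (c a : ℝ) (p : ℝ[X]) : pD c (C a * p) = C a * pD c p := by
  simp [pD, mul_comp]; ring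

lemma foldr_pD_add (cs : List ℝ) : ∀ p q : ℝ[X],
    cs.foldr pD (p + q) = cs.foldr pD p + cs.foldr pD q := by
  induction cs with
  | nil => intro p q; rfl
  | cons c cs ih => intro p q; simp only [List.foldr, ih p q, pD_add]

lemma foldr_pD_Cmul (cs : List ℝ) : ∀ (a : ℝ) (p : ℝ[X]),
    cs.foldr pD (C a * p) = C a * cs.foldr pD p := by
  induction cs with
  | nil => intro a p; rfl
  | cons c cs ih => intro a p; simp only [List.foldr, ih a p, pD_Cmul]

lemma degree_rem_lt (c : ℝ) (m : ℕ) :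
    (pD c (X ^ (m + 1)) - C ((m + 1 : ℝ) * c) * X ^ m).degree < (m : WithBot ℕ) := by
  rw [degree_lt_iff_coeff_zero]
  intro j hj
  simp only [pD, X_pow_comp, coeff_sub, coeff_C_mul, coeff_X_add_C_pow, coeff_X_pow]
  by_cases e1 : j = m
  · rw [if_neg (by omega), if_pos e1, show m + 1 - j = 1 by omega, pow_one, e1,
      Nat.choose_succ_self_right]
    push_cast; ring
  · by_cases e2 : j = m + 1
    · subst e2
      rw [if_pos rfl, if_neg (by omega), Nat.sub_self, pow_zero, Nat.choose_self]
      push_cast; ring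
    · rw [if_neg (by omega), if_neg (by omega), Nat.choose_eq_zero_of_lt (by omega)]
      push_cast; ring

lemma key (m : ℕ) : ∀ cs : List ℝ, cs.length = m →
    cs.foldr pD ((X : ℝ[X]) ^ m) = C ((m.factorial : ℝ) * cs.prod) := by
  induction m with
  | zero =>
    intro cs hcs
    rw [List.length_eq_zero_iff.mp hcs]
    simp
  | succ m ih =>
    intro cs hcs
    rcases cs.eq_nil_or_concat with rfl | ⟨cs', c, rfl⟩
    · simp at hcs
    · simp only [List.concat_eq_append] at hcs ⊢
      have hlen : cs'.length = m := by simpa using hcs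
      rw [List.foldr_append]
      have hsplit : pD c ((X : ℝ[X]) ^ (m + 1)) =
          C ((m + 1 : ℝ) * c) * X ^ m +
            (pD c (X ^ (m + 1)) - C ((m + 1 : ℝ) * c) * X ^ m) := by ring
      have hrem : cs'.foldr pD (pD c (X ^ (m + 1)) - C ((m + 1 : ℝ) * c) * X ^ m) = 0 := by
        apply foldr_pD_eq_zero
        rw [hlen]
        exact degree_rem_lt c m
      calc cs'.foldr pD (List.foldr pD (X ^ (m + 1)) [c])
          = cs'.foldr pD (pD c (X ^ (m + 1))) := rfl
        _ = cs'.foldr pD (C ((m + 1 : ℝ) * c) * X ^ m) +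
              cs'.foldr pD (pD c (X ^ (m + 1)) - C ((m + 1 : ℝ) * c) * X ^ m) := by
            rw [← foldr_pD_add, ← hsplit]
        _ = C ((m + 1 : ℝ) * c) * C ((m.factorial : ℝ) * cs'.prod) + 0 := by
            rw [foldr_pD_Cmul, ih cs' hlen, hrem]
        _ = C (((m + 1).factorial : ℝ) * (cs' ++ [c]).prod) := by
            rw [← C_mul]
            rw [List.prod_append, List.prod_cons, List.prod_nil, Nat.factorial_succ]
            push_cast
            ring

lemma dOps_poly (γ : ℝ → ℝ) (hγ : ∀ x y, γ (x + y) = γ x + γ y) :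
    ∀ (hs : List ℝ) (q : ℝ[X]) (x : ℝ),
      dOps hs (fun t => q.eval (γ t)) x = ((hs.map γ).foldr pD q).eval (γ x) := by
  intro hs
  induction hs with
  | nil => intro q x; rfl
  | cons h hs ih =>
    intro q x
    show dOp h (dOps hs fun t => q.eval (γ t)) x = _
    simp only [dOp]
    rw [ih q (x + h), ih q x, hγ]
    simp only [List.map_cons, List.foldr, pD, eval_sub, eval_comp, eval_add, eval_X, eval_C]

lemma dOps_add (hs : List ℝ) : ∀ (f g : ℝ → ℝ) (x : ℝ),
    dOps hs (fun t => f t + g t) x = dOps hs f x + dOps hs g x := by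
  induction hs with
  | nil => intro f g x; rfl
  | cons h hs ih =>
    intro f g x
    show dOp h (dOps hs fun t => f t + g t) x = dOp h (dOps hs f) x + dOp h (dOps hs g) x
    simp only [dOp, ih]
    ring

theorem stmt6 (n : ℕ) (hn : 1 ≤ n) (α β : ℝ → ℝ)
    (hα : ∀ x y, α (x + y) = α x + α y) (hβ : ∀ x y, β (x + y) = β x + β y)
    (hid : ∀ x, α x + β x = x)
    (h1 : α (Real.sqrt 2 - 1) = -1) (h2 : α 1 = 1) (h3 : α (1 + Real.sqrt 2) = 1)
    (x : ℝ) :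
    dOps ((Real.sqrt 2 - 1) :: (1 : ℝ) :: List.replicate (n - 1) (1 + Real.sqrt 2))
        (fun t => (α t) ^ (n + 1) + (β t) ^ (n + 1)) x = -(Nat.factorial (n + 1) : ℝ) := by
  set L := (Real.sqrt 2 - 1) :: (1 : ℝ) :: List.replicate (n - 1) (1 + Real.sqrt 2) with hL
  have hβ1 : β 1 = 0 := by have := hid 1; rw [h2] at this; linarith
  have hlen : L.length = n + 1 := by
    simp only [hL, List.length_cons, List.length_replicate]; omega
  have hfun : (fun t => (α t) ^ (n + 1) + (β t) ^ (n + 1))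
      = fun t => ((X : ℝ[X]) ^ (n + 1)).eval (α t) + ((X : ℝ[X]) ^ (n + 1)).eval (β t) := by
    funext t; simp
  rw [hfun,
    dOps_add L (fun t => ((X : ℝ[X]) ^ (n + 1)).eval (α t))
      (fun t => ((X : ℝ[X]) ^ (n + 1)).eval (β t)) x,
    dOps_poly α hα L _ x, dOps_poly β hβ L _ x,
    key (n + 1) (L.map α) (by simp [hlen]),
    key (n + 1) (L.map β) (by simp [hlen])]
  have hprodα : (L.map α).prod = -1 := by
    simp [hL, h1, h2, h3, List.map_replicate, List.prod_replicate]
  have hprodβ : (L.map β).prod = 0 := by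
    simp [hL, hβ1]
  rw [hprodα, hprodβ]
  simp
end

section
/- Let n ∈ ℕ, c > 0, I ⊆ ℝ an interval, and f : I → ℝ. Then f is strongly n-Jensen-convex with modulus c if and only if the function g(x) = f(x) − c·x^{n+1} is n-Jensen-convex on I. -/
open List Finset

open fwdDiff in
lemma dOps_replicate (k : ℕ) (h : ℝ) (f : ℝ → ℝ) :
    dOps (List.replicate k h) f = (fwdDiff h)^[k] f := by
  induction k generalizing f with
  | zero => rfl
  | succ k IH =>
      rw [List.replicate_succ]
      show dOp h (dOps (List.replicate k h) f) = _
      rw [IH, Function.iterate_succ_apply']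
      rfl

open fwdDiff in
lemma fwdDiff_pow_key (k : ℕ) (h : ℝ) :
    (∀ m < k, (fwdDiff h)^[k] (fun t : ℝ => t ^ m) = fun _ => 0) ∧
      (fwdDiff h)^[k] (fun t : ℝ => t ^ k) = fun _ => (k.factorial : ℝ) * h ^ k := by
  induction k with
  | zero => exact ⟨fun m hm => absurd hm (Nat.not_lt_zero m), by simp⟩
  | succ k IH =>
      have step : ∀ m : ℕ, Δ_[h] (fun t : ℝ => t ^ m)
          = ∑ j ∈ Finset.range m, (fun t : ℝ => (m.choose j : ℝ) * h ^ (m - j) * t ^ j) := by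
        intro m
        funext t
        simp only [fwdDiff, Finset.sum_apply]
        rw [add_pow]
        rw [Finset.sum_range_succ]
        simp [mul_comm, mul_assoc, mul_left_comm]
      have expand : ∀ m : ℕ, (fwdDiff h)^[k+1] (fun t : ℝ => t ^ m)
          = ∑ j ∈ Finset.range m,
              (m.choose j : ℝ) • (fwdDiff h)^[k] (fun t : ℝ => h ^ (m - j) * t ^ j) := by
        intro m
        rw [Function.iterate_succ_apply, step m, fwdDiff_iter_finset_sum]
        refine Finset.sum_congr rfl fun j _ => ?_
        rw [← fwdDiff_iter_const_smul]
        congr 1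
        funext t
        simp [mul_assoc]
      have hzf : ∀ m : ℕ, ∀ j < k, (fwdDiff h)^[k] (fun t : ℝ => h ^ (m - j) * t ^ j)
          = fun _ => 0 := by
        intro m j hj
        have h1 := IH.1 j hj
        calc (fwdDiff h)^[k] (fun t : ℝ => h ^ (m - j) * t ^ j)
            = (fwdDiff h)^[k] ((h ^ (m - j)) • fun t : ℝ => t ^ j) := by
              congr 1 <;> (funext s; simp [smul_eq_mul])
          _ = (h ^ (m - j)) • (fwdDiff h)^[k] (fun t : ℝ => t ^ j) :=
              fwdDiff_iter_const_smul ..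
          _ = fun _ => 0 := by funext s; rw [h1]; simp
      have zerocase : ∀ m < k + 1, (fwdDiff h)^[k+1] (fun t : ℝ => t ^ m) = fun _ => 0 := by
        intro m hm
        rw [expand m]
        refine Finset.sum_eq_zero fun j hj => ?_
        have hj' : j < k := lt_of_lt_of_le (Finset.mem_range.mp hj) (Nat.lt_succ_iff.mp hm)
        rw [hzf m j hj']
        funext s; simp
      refine ⟨zerocase, ?_⟩
      rw [expand (k + 1), Finset.sum_range_succ]
      have hzero : ∑ j ∈ Finset.range k,
          (((k+1).choose j : ℝ) • (fwdDiff h)^[k] fun t : ℝ => h ^ (k + 1 - j) * t ^ j) = 0 := by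
        refine Finset.sum_eq_zero fun j hj => ?_
        rw [hzf (k+1) j (Finset.mem_range.mp hj)]
        funext s; simp
      rw [hzero, zero_add]
      have hlast : (fwdDiff h)^[k] (fun t : ℝ => h ^ (k + 1 - k) * t ^ k)
          = fun _ => h * ((k.factorial : ℝ) * h ^ k) := by
        have h2 := IH.2
        calc (fwdDiff h)^[k] (fun t : ℝ => h ^ (k + 1 - k) * t ^ k)
            = (fwdDiff h)^[k] ((h ^ (k + 1 - k)) • fun t : ℝ => t ^ k) := by
              congr 1 <;> (funext s; simp [smul_eq_mul])
          _ = (h ^ (k + 1 - k)) • (fwdDiff h)^[k] (fun t : ℝ => t ^ k) :=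
              fwdDiff_iter_const_smul ..
          _ = fun _ => h * ((k.factorial : ℝ) * h ^ k) := by
              funext s; rw [h2]
              have hk : k + 1 - k = 1 := by omega
              simp [hk, smul_eq_mul]
      rw [hlast]
      funext t
      simp only [Nat.choose_succ_self_right, Pi.smul_apply, smul_eq_mul, Nat.factorial_succ]
      push_cast
      ring

open fwdDiff in
lemma fwdDiff_iter_sub (h : ℝ) (f g : ℝ → ℝ) (k : ℕ) :
    (fwdDiff h)^[k] (fun t => f t - g t) = fun t => (fwdDiff h)^[k] f t - (fwdDiff h)^[k] g t := by
  have : (fun t => f t - g t) = f + (-1 : ℝ) • g := by funext t; simp; ring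
  rw [this, fwdDiff_iter_add, fwdDiff_iter_const_smul]
  funext t; simp; ring

theorem stmt9 (n : ℕ) (c : ℝ) (hc : 0 < c) (I : Set ℝ) (hI : I.OrdConnected)
    (f : ℝ → ℝ) :
    (∀ x ∈ I, ∀ h : ℝ, 0 < h → x + (n + 1 : ℝ) * h ∈ I →
        c * (Nat.factorial (n + 1) : ℝ) * h ^ (n + 1) ≤ dOps (List.replicate (n + 1) h) f x) ↔
    (∀ x ∈ I, ∀ h : ℝ, 0 < h → x + (n + 1 : ℝ) * h ∈ I →
        0 ≤ dOps (List.replicate (n + 1) h) (fun t => f t - c * t ^ (n + 1)) x) := by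
  have key : ∀ x h : ℝ,
      dOps (List.replicate (n + 1) h) (fun t => f t - c * t ^ (n + 1)) x
        = dOps (List.replicate (n + 1) h) f x
            - c * ((n + 1).factorial : ℝ) * h ^ (n + 1) := by
    intro x h
    rw [dOps_replicate, dOps_replicate]
    rw [show (fun t => f t - c * t ^ (n + 1)) = (fun t => f t - (c • fun s : ℝ => s ^ (n+1)) t) by
      funext t; simp [smul_eq_mul]]
    rw [fwdDiff_iter_sub]
    simp only [fwdDiff_iter_const_smul, Pi.smul_apply, smul_eq_mul]
    rw [(fwdDiff_pow_key (n + 1) h).2]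
    ring
  constructor
  · intro H x hx h hh hxh
    rw [key]
    have := H x hx h hh hxh
    linarith
  · intro H x hx h hh hxh
    have := H x hx h hh hxh
    rw [key] at this
    linarith
end
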